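/- If the diamond principle ◊_κ holds at a regular uncountable cardinal κ, then NS_κ is not κ⁺-saturated. -/

import Mathlib

/-!
Under `◊_κ` with guessing sequence `A`, every `B ⊆ κ` has a stationary guessing set
`{α < κ | B ∩ α = A α}`. If `B ≠ B'` differ at `β`, no `α > β` can guess both, so their guessing
sets meet inside `[0, β]`, which misses the club `(β, κ)`. Since `2 ^ κ ≥ κ⁺`, there are `κ⁺` many
distinct `B ⊆ κ`, hence `κ⁺` many stationary sets with pairwise nonstationary intersections.
-/

open Ordinal Set Cardinal

/-- `C` is a club (closed unbounded) subset of the ordinal `κ`. -/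
def IsClubIn (C : Set Ordinal) (κ : Ordinal) : Prop :=
  C ⊆ Set.Iio κ ∧ (∀ β < κ, ∃ γ ∈ C, β < γ) ∧
    (∀ α < κ, α ≠ 0 → (∀ β < α, ∃ γ ∈ C, β < γ ∧ γ < α) → α ∈ C)

/-- `S` is stationary in `κ`: it meets every club of `κ`. -/
def IsStationaryIn (S : Set Ordinal) (κ : Ordinal) : Prop :=
  ∀ C, IsClubIn C κ → (S ∩ C).Nonempty

/-- `S^θ_κ`, the set of ordinals below `κ` of cofinality `θ`. -/
def cofSet (κ θ : Cardinal) : Set Ordinal :=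
  {α | α < κ.ord ∧ α.cof = θ}

lemma isClubIn_Ioo {β κ : Ordinal} (hβ : β < κ) (hκ : Order.IsSuccLimit κ) :
    IsClubIn (Ioo β κ) κ := by
  refine ⟨fun _ hx => hx.2, fun b hb => ?_, fun α hα hα0 hacc => ?_⟩
  · refine ⟨Order.succ (max b β), ⟨?_, hκ.succ_lt (max_lt hb hβ)⟩, ?_⟩
    · exact (le_max_right b β).trans_lt (Order.lt_succ _)
    · exact (le_max_left b β).trans_lt (Order.lt_succ _)
  · obtain ⟨γ, ⟨hβγ, -⟩, -, hγα⟩ := hacc 0 (pos_iff_ne_zero.2 hα0)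
    exact ⟨hβγ.trans hγα, hα⟩

lemma not_isStationaryIn_of_subset_Iic {S : Set Ordinal} {β κ : Ordinal} (hβ : β < κ)
    (hκ : Order.IsSuccLimit κ) (hS : S ⊆ Iic β) : ¬ IsStationaryIn S κ := fun hst => by
  obtain ⟨α, hαS, hβα, -⟩ := hst _ (isClubIn_Ioo hβ hκ)
  exact (hS hαS).not_gt hβα

def guessSet (A : Ordinal → Set Ordinal) (κ : Ordinal) (B : Set Ordinal) : Set Ordinal :=
  {α | α < κ ∧ B ∩ Iio α = A α}

lemma guessSet_subset_Iio (A : Ordinal → Set Ordinal) (κ : Ordinal) (B : Set Ordinal) :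
    guessSet A κ B ⊆ Iio κ := fun _ hα => hα.1

lemma guessSet_inter_subset_Iic {A : Ordinal → Set Ordinal} {κ β : Ordinal} {B B' : Set Ordinal}
    (hβ : β ∈ symmDiff B B') : guessSet A κ B ∩ guessSet A κ B' ⊆ Iic β := by
  rintro α ⟨⟨-, hα⟩, -, hα'⟩
  refine not_lt.1 fun (hβα : β < α) => ?_
  have hagree : β ∈ B ∩ Iio α ↔ β ∈ B' ∩ Iio α := by rw [hα, hα']
  rw [mem_symmDiff] at hβ
  simp only [mem_inter_iff, mem_Iio, hβα, and_true] at hagree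
  tauto

lemma exists_injOn_subsets_Iio {o o' : Ordinal.{u}} (h : o'.card ≤ 2 ^ o.card) :
    ∃ B : Ordinal.{u} → Set Ordinal.{u}, (∀ i, B i ⊆ Iio o) ∧ InjOn B (Iio o') := by
  obtain ⟨g⟩ : Nonempty (Iio o' ↪ Set (Iio o)) := by
    rwa [← Cardinal.le_def, Cardinal.mk_Iio_ordinal, mk_set, Cardinal.mk_Iio_ordinal,
      ← lift_two_power, Cardinal.lift_le]
  refine ⟨fun i => if hi : i < o' then Subtype.val '' g ⟨i, hi⟩ else ∅, fun i => ?_,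
    fun i hi j hj hij => ?_⟩
  · dsimp only
    split_ifs
    · exact image_subset_iff.2 fun x _ => x.2
    · exact empty_subset _
  · simp only [dif_pos (mem_Iio.1 hi), dif_pos (mem_Iio.1 hj)] at hij
    exact congrArg Subtype.val (g.injective (image_injective.2 Subtype.val_injective hij))

theorem diamond_implies_not_saturated_general (κ : Cardinal.{0})
    (hκω : Cardinal.aleph0 < κ)
    (A : Ordinal.{0} → Set Ordinal.{0})
    (hdiamond : ∀ B : Set Ordinal.{0}, B ⊆ Set.Iio κ.ord →
      IsStationaryIn {α | α < κ.ord ∧ B ∩ Set.Iio α = A α} κ.ord) :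
    ∃ F : Ordinal.{0} → Set Ordinal.{0},
      (∀ i < (Order.succ κ).ord, F i ⊆ Set.Iio κ.ord ∧ IsStationaryIn (F i) κ.ord) ∧
      (∀ i j, i < (Order.succ κ).ord → j < (Order.succ κ).ord → i ≠ j →
        ¬ IsStationaryIn (F i ∩ F j) κ.ord) := by
  have hlim : Order.IsSuccLimit κ.ord := isSuccLimit_ord hκω.le
  obtain ⟨B, hBsub, hBinj⟩ := exists_injOn_subsets_Iio (o := κ.ord) (o' := (Order.succ κ).ord)
    (by rw [card_ord, card_ord]; exact Order.succ_le_of_lt (cantor κ))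
  refine ⟨fun i => guessSet A κ.ord (B i),
    fun i _ => ⟨guessSet_subset_Iio A κ.ord (B i), hdiamond (B i) (hBsub i)⟩,
    fun i j hi hj hij => ?_⟩
  obtain ⟨β, hβ⟩ : (symmDiff (B i) (B j)).Nonempty :=
    symmDiff_nonempty.2 fun h => hij (hBinj hi hj h)
  have hβκ : β < κ.ord := union_subset (hBsub i) (hBsub j) (symmDiff_subset_union hβ)
  exact not_isStationaryIn_of_subset_Iic hβκ hlim (guessSet_inter_subset_Iic hβ)

/-- diamond at a regular uncountable `κ` implies `NS_κ` is not
`κ⁺`-saturated. -/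
theorem diamond_implies_not_saturated (κ : Cardinal.{0}) (hκ : κ.IsRegular)
    (hκω : Cardinal.aleph0 < κ)
    (A : Ordinal.{0} → Set Ordinal.{0})
    (hAsub : ∀ α < κ.ord, A α ⊆ Set.Iio α)
    (hdiamond : ∀ B : Set Ordinal.{0}, B ⊆ Set.Iio κ.ord →
      IsStationaryIn {α | α < κ.ord ∧ B ∩ Set.Iio α = A α} κ.ord) :
    ∃ F : Ordinal.{0} → Set Ordinal.{0},
      (∀ i < (Order.succ κ).ord, F i ⊆ Set.Iio κ.ord ∧ IsStationaryIn (F i) κ.ord) ∧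
      (∀ i j, i < (Order.succ κ).ord → j < (Order.succ κ).ord → i ≠ j →
        ¬ IsStationaryIn (F i ∩ F j) κ.ord) :=
  diamond_implies_not_saturated_general κ hκω A hdiamond
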